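/- Let $n \geq 2$ and $p > 1$. Define $H(t) = \int_0^t e^{\frac{1}{p} s^p} s^{n-1} \, ds$ and, for $\psi > 0$, $I_\psi(t) = \frac{1}{n\psi} e^{\frac{t^p}{p}}$. Suppose $t_0 > 0$ is a point with $H(t_0) = I_\psi(t_0)$ and $H'(t_0) \geq I_\psi'(t_0)$. Then $t_0^{n-p} \geq \frac{1}{n\psi}$, and for every $t > t_0$, $H(t) > I_\psi(t)$. -/

import Mathlib

/-!
At a point where the two sides agree, the derivative condition `H'(t₀) ≥ I_ψ'(t₀)` reads
`t₀^(n-p) ≥ 1/(nψ)` after cancelling the common factor `e^{t₀^p/p} t₀^(p-1)`. Since `n > p`,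
`t^(n-p)` is strictly increasing, so `H' > I_ψ'` on `(t₀, ∞)` and `H - I_ψ` is strictly
increasing there, starting from `0`.
-/

open Set Real

theorem lt_of_hasDerivAt_lt_of_le {f g f' g' : ℝ → ℝ} {a b : ℝ} (hab : a < b)
    (hf : ∀ x ∈ Icc a b, HasDerivAt f (f' x) x) (hg : ∀ x ∈ Icc a b, HasDerivAt g (g' x) x)
    (hlt : ∀ x ∈ Ioo a b, g' x < f' x) (ha : g a ≤ f a) : g b < f b := by
  have hmono : StrictMonoOn (f - g) (Icc a b) := by
    refine strictMonoOn_of_hasDerivWithinAt_pos (convex_Icc a b) (f' := f' - g')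
      (fun x hx => ((hf x hx).sub (hg x hx)).continuousAt.continuousWithinAt) (fun x hx => ?_)
      (fun x hx => ?_)
    · rw [interior_Icc] at hx
      exact ((hf x (Ioo_subset_Icc_self hx)).sub (hg x (Ioo_subset_Icc_self hx))).hasDerivWithinAt
    · rw [interior_Icc] at hx
      exact sub_pos.mpr (hlt x hx)
  have := hmono (left_mem_Icc.mpr hab.le) (right_mem_Icc.mpr hab.le) hab
  simp only [Pi.sub_apply] at this
  linarith

theorem Real.rpow_sub_one_eq_mul {x : ℝ} (hx : 0 < x) (p q : ℝ) :
    x ^ (q - 1) = x ^ (p - 1) * x ^ (q - p) := by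
  rw [← rpow_add hx]
  ring_nf

theorem Real.mul_rpow_sub_one_le_rpow_sub_one_iff {x : ℝ} (hx : 0 < x) (c p q : ℝ) :
    c * x ^ (p - 1) ≤ x ^ (q - 1) ↔ c ≤ x ^ (q - p) := by
  rw [rpow_sub_one_eq_mul hx p q, mul_comm c, mul_le_mul_iff_right₀ (rpow_pos_of_pos hx _)]

theorem Real.mul_rpow_sub_one_lt_rpow_sub_one_iff {x : ℝ} (hx : 0 < x) (c p q : ℝ) :
    c * x ^ (p - 1) < x ^ (q - 1) ↔ c < x ^ (q - p) := by
  rw [rpow_sub_one_eq_mul hx p q, mul_comm c, mul_lt_mul_iff_right₀ (rpow_pos_of_pos hx _)]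

theorem Real.hasDerivAt_exp_rpow_div {p x : ℝ} (hp : p ≠ 0) (hx : 0 < x) :
    HasDerivAt (fun t => exp (t ^ p / p)) (exp (x ^ p / p) * x ^ (p - 1)) x := by
  have h := ((hasDerivAt_rpow_const (p := p) (Or.inl hx.ne')).div_const p).exp
  rwa [mul_div_cancel_left₀ _ hp] at h

theorem Real.hasDerivAt_integral_exp_rpow_div_mul_rpow {p q : ℝ} (hp : 0 < p) (hq : 0 ≤ q)
    (x : ℝ) :
    HasDerivAt (fun t => ∫ s in (0 : ℝ)..t, exp (s ^ p / p) * s ^ q)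
      (exp (x ^ p / p) * x ^ q) x := by
  have hcont : Continuous fun s : ℝ => exp (s ^ p / p) * s ^ q := by
    have := continuous_rpow_const hp.le
    have := continuous_rpow_const hq
    fun_prop
  exact hcont.integral_hasStrictDerivAt 0 x |>.hasDerivAt

theorem stmt_15_general (n : ℕ) (p : ℝ) (hp : 1 < p) (hpn : p < n) (ψ : ℝ)
    (t0 : ℝ) (ht0 : 0 < t0)
    (heq : (∫ s in (0 : ℝ)..t0, Real.exp (s ^ p / p) * s ^ ((n : ℝ) - 1)) =
      1 / (n * ψ) * Real.exp (t0 ^ p / p))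
    (hderiv : Real.exp (t0 ^ p / p) * t0 ^ ((n : ℝ) - 1) ≥
      1 / (n * ψ) * (Real.exp (t0 ^ p / p) * t0 ^ (p - 1))) :
    t0 ^ ((n : ℝ) - p) ≥ 1 / (n * ψ) ∧
      ∀ t : ℝ, t0 < t →
        (∫ s in (0 : ℝ)..t, Real.exp (s ^ p / p) * s ^ ((n : ℝ) - 1)) >
          1 / (n * ψ) * Real.exp (t ^ p / p) := by
  set c := 1 / (n * ψ)
  have hcrit : c ≤ t0 ^ ((n : ℝ) - p) := by
    rw [← mul_rpow_sub_one_le_rpow_sub_one_iff ht0,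
      ← mul_le_mul_iff_right₀ (exp_pos (t0 ^ p / p))]
    linarith
  refine ⟨hcrit, fun t ht => lt_of_hasDerivAt_lt_of_le ht
    (fun x _ => hasDerivAt_integral_exp_rpow_div_mul_rpow (by linarith) (by linarith) x)
    (fun x hx => (hasDerivAt_exp_rpow_div (by linarith) (ht0.trans_le hx.1)).const_mul c)
    (fun x hx => ?_) heq.ge⟩
  have hx0 : 0 < x := ht0.trans hx.1
  have hcx : c < x ^ ((n : ℝ) - p) :=
    hcrit.trans_lt (rpow_lt_rpow ht0.le hx.1 (by linarith))
  rw [mul_left_comm, mul_lt_mul_iff_right₀ (exp_pos _)]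
  exact (mul_rpow_sub_one_lt_rpow_sub_one_iff hx0 c p n).mpr hcx

theorem stmt_15 (n : ℕ) (hn : 2 ≤ n) (p : ℝ) (hp : 1 < p) (hpn : p < n) (ψ : ℝ) (hψ : 0 < ψ)
    (t0 : ℝ) (ht0 : 0 < t0)
    (heq : (∫ s in (0 : ℝ)..t0, Real.exp (s ^ p / p) * s ^ ((n : ℝ) - 1)) =
      1 / (n * ψ) * Real.exp (t0 ^ p / p))
    (hderiv : Real.exp (t0 ^ p / p) * t0 ^ ((n : ℝ) - 1) ≥
      1 / (n * ψ) * (Real.exp (t0 ^ p / p) * t0 ^ (p - 1))) :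
    t0 ^ ((n : ℝ) - p) ≥ 1 / (n * ψ) ∧
      ∀ t : ℝ, t0 < t →
        (∫ s in (0 : ℝ)..t, Real.exp (s ^ p / p) * s ^ ((n : ℝ) - 1)) >
          1 / (n * ψ) * Real.exp (t ^ p / p) :=
  stmt_15_general n p hp hpn ψ t0 ht0 heq hderiv
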